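/- Let G be a non-trivial game on n binary players, let π̂(G) be the empirical proportion of equilibria computed from a dataset D, and let π̄(G) = P_{x∼Q}[x ∈ NE(G)] for a distribution Q on {−1,+1}^n; write L̂(G,q) for the average log-likelihood of D and L̄(G,q) = E_{x∼Q}[log p_{(G,q)}(x)]. Then for any 0 < q'' < q' < q < 1 and any ε > 0: if |L̂(G,q) − L̄(G,q)| ≤ ε/2 and |L̂(G,q'') − L̄(G,q'')| ≤ ε/2, then |L̂(G,q') − L̄(G,q')| ≤ ε/2. (In fact, L̂(G,q) − L̄(G,q) = (π̂(G) − π̄(G))·log( (q/(1−q))·((1−π(G))/π(G)) ), which is monotone in q.) -/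

import Mathlib

open Finset
open scoped Classical BigOperators

/-- The hypercube `{-1,+1}^n` of joint actions, as a finite set of real vectors. -/
noncomputable def cube (n : ℕ) : Finset (Fin n → ℝ) :=
  (Finset.univ : Finset (Fin n → Bool)).image (fun s i => if s i then (1 : ℝ) else -1)

/-- The generative-model PMF `p_{(N,q)}(x) = q·1[x∈N]/|N| + (1−q)·1[x∉N]/(2^n − |N|)`. -/
noncomputable def gpmf (n : ℕ) (N : Finset (Fin n → ℝ)) (q : ℝ) (x : Fin n → ℝ) : ℝ :=
  q * (if x ∈ N then 1 else 0) / (N.card : ℝ) +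
    (1 - q) * (if x ∉ N then 1 else 0) / ((2 : ℝ) ^ n - (N.card : ℝ))

/-- Average log-likelihood `L̂(G,q) = (1/m) ∑_l log p_{(G,q)}(x^{(l)})`. -/
noncomputable def avgLL (n m : ℕ) (N : Finset (Fin n → ℝ)) (q : ℝ)
    (xs : Fin m → Fin n → ℝ) : ℝ :=
  (1 / (m : ℝ)) * ∑ l, Real.log (gpmf n N q (xs l))

/-- Expected log-likelihood `L̄(G,q) = E_{x∼Q}[log p_{(G,q)}(x)]` for a distribution `Q`
on `{-1,+1}^n` given by its probability mass function. -/
noncomputable def expLL (n : ℕ) (Q : (Fin n → ℝ) → ℝ) (N : Finset (Fin n → ℝ)) (q : ℝ) : ℝ :=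
  ∑ x ∈ cube n, Q x * Real.log (gpmf n N q x)

/-! Both `L̂(G,q)` and `L̄(G,q)` equal `π · θ(q) + log ((1 − q) / (2^n − |NE(G)|))`, with `π` the
empirical resp. expected proportion of equilibria and `θ(q)` the log-odds of an equilibrium, so
their difference is `(π̂ − π̄) · θ(q)`. Since `θ` is increasing on `(0,1)`, `θ(q')` lies between
`θ(q'')` and `θ(q)`, and the absolute value of a fixed multiple of it is bounded by the larger of
the two bounds at the ends. -/

/-- For `0 < q < 1` and `0 < |N| < 2^n` this is `log ((q / (1 − q)) · ((1 − π) / π))`,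
`π = |N| / 2^n`. -/
noncomputable def logOddsNE (n : ℕ) (N : Finset (Fin n → ℝ)) (q : ℝ) : ℝ :=
  Real.log (q / N.card) - Real.log ((1 - q) / ((2 : ℝ) ^ n - N.card))

noncomputable def empiricalPropNE (n m : ℕ) (N : Finset (Fin n → ℝ))
    (xs : Fin m → Fin n → ℝ) : ℝ :=
  (1 / (m : ℝ)) * ∑ l, if xs l ∈ N then (1 : ℝ) else 0

noncomputable def expectedPropNE (n : ℕ) (Q : (Fin n → ℝ) → ℝ) (N : Finset (Fin n → ℝ)) : ℝ :=
  ∑ x ∈ cube n, Q x * if x ∈ N then (1 : ℝ) else 0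

section LogLikelihood

variable {n : ℕ} (N : Finset (Fin n → ℝ)) (q : ℝ)

theorem log_gpmf (x : Fin n → ℝ) :
    Real.log (gpmf n N q x) = (if x ∈ N then (1 : ℝ) else 0) * logOddsNE n N q
      + Real.log ((1 - q) / ((2 : ℝ) ^ n - N.card)) := by
  by_cases hx : x ∈ N <;> simp [gpmf, logOddsNE, hx]

theorem avgLL_eq {m : ℕ} (hm : m ≠ 0) (xs : Fin m → Fin n → ℝ) :
    avgLL n m N q xs = empiricalPropNE n m N xs * logOddsNE n N q
      + Real.log ((1 - q) / ((2 : ℝ) ^ n - N.card)) := by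
  have hm' : (m : ℝ) ≠ 0 := Nat.cast_ne_zero.mpr hm
  simp only [avgLL, empiricalPropNE, log_gpmf, Finset.sum_add_distrib, ← Finset.sum_mul,
    Finset.sum_const, Finset.card_univ, Fintype.card_fin, nsmul_eq_mul]
  field_simp

theorem expLL_eq {Q : (Fin n → ℝ) → ℝ} (hQ1 : ∑ x ∈ cube n, Q x = 1) :
    expLL n Q N q = expectedPropNE n Q N * logOddsNE n N q
      + Real.log ((1 - q) / ((2 : ℝ) ^ n - N.card)) := by
  simp only [expLL, expectedPropNE, log_gpmf, mul_add, Finset.sum_add_distrib, ← mul_assoc,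
    ← Finset.sum_mul, hQ1, one_mul]

theorem avgLL_sub_expLL {m : ℕ} (hm : m ≠ 0) (xs : Fin m → Fin n → ℝ)
    {Q : (Fin n → ℝ) → ℝ} (hQ1 : ∑ x ∈ cube n, Q x = 1) :
    avgLL n m N q xs - expLL n Q N q
      = (empiricalPropNE n m N xs - expectedPropNE n Q N) * logOddsNE n N q := by
  rw [avgLL_eq N q hm, expLL_eq N q hQ1]
  ring

theorem logOddsNE_monotoneOn (hpos : 0 < N.card) (hlt : N.card < 2 ^ n) :
    MonotoneOn (logOddsNE n N) (Set.Ioo 0 1) := by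
  have hK : (0 : ℝ) < N.card := by exact_mod_cast hpos
  have hT : (0 : ℝ) < (2 : ℝ) ^ n - N.card := by
    have : (N.card : ℝ) < (2 : ℝ) ^ n := by exact_mod_cast hlt
    linarith
  intro s ⟨hs0, _⟩ t ⟨_, ht1⟩ hst
  have hnum : Real.log (s / N.card) ≤ Real.log (t / N.card) :=
    Real.log_le_log (by positivity) (by gcongr)
  have hden : Real.log ((1 - t) / ((2 : ℝ) ^ n - N.card))
      ≤ Real.log ((1 - s) / ((2 : ℝ) ^ n - N.card)) :=
    Real.log_le_log (div_pos (by linarith) hT) (by gcongr)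
  simp only [logOddsNE]
  linarith

end LogLikelihood

theorem abs_mul_le_of_le_of_le {a b c k e : ℝ} (hab : a ≤ b) (hbc : b ≤ c)
    (ha : |k * a| ≤ e) (hc : |k * c| ≤ e) : |k * b| ≤ e := by
  rw [abs_mul] at ha hc ⊢
  calc |k| * |b| ≤ |k| * max |a| |c| := by gcongr; exact abs_le_max_abs_abs hab hbc
    _ = max (|k| * |a|) (|k| * |c|) := mul_max_of_nonneg _ _ (abs_nonneg k)
    _ ≤ e := max_le ha hc

theorem stmt3_general (n m : ℕ) (hm : 1 ≤ m) (N : Finset (Fin n → ℝ))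
    (hpos : 0 < N.card) (hlt : N.card < 2 ^ n)
    (xs : Fin m → Fin n → ℝ)
    (Q : (Fin n → ℝ) → ℝ) (hQ1 : ∑ x ∈ cube n, Q x = 1)
    (q q' q'' : ℝ) (h0 : 0 < q'') (h1 : q'' < q') (h2 : q' < q) (h3 : q < 1)
    (ε : ℝ)
    (ha : |avgLL n m N q xs - expLL n Q N q| ≤ ε / 2)
    (hb : |avgLL n m N q'' xs - expLL n Q N q''| ≤ ε / 2) :
    |avgLL n m N q' xs - expLL n Q N q'| ≤ ε / 2 := by
  have hm0 : m ≠ 0 := Nat.one_le_iff_ne_zero.mp hm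
  rw [avgLL_sub_expLL N _ hm0 xs hQ1] at ha hb ⊢
  have hmono := logOddsNE_monotoneOn N hpos hlt
  have hq'' : q'' ∈ Set.Ioo (0 : ℝ) 1 := ⟨h0, by linarith⟩
  have hq' : q' ∈ Set.Ioo (0 : ℝ) 1 := ⟨by linarith, by linarith⟩
  have hq : q ∈ Set.Ioo (0 : ℝ) 1 := ⟨by linarith, h3⟩
  exact abs_mul_le_of_le_of_le (hmono hq'' hq' h1.le) (hmono hq' hq h2.le) hb ha

/-- for `0 < q'' < q' < q < 1`, uniform closeness of `L̂` and `L̄` at the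
extreme values `q` and `q''` implies closeness at the intermediate value `q'`. -/
theorem stmt3 (n m : ℕ) (hm : 1 ≤ m) (N : Finset (Fin n → ℝ)) (hsub : N ⊆ cube n)
    (hpos : 0 < N.card) (hlt : N.card < 2 ^ n)
    (xs : Fin m → Fin n → ℝ) (hxs : ∀ l, xs l ∈ cube n)
    (Q : (Fin n → ℝ) → ℝ) (hQ0 : ∀ x, 0 ≤ Q x) (hQ1 : ∑ x ∈ cube n, Q x = 1)
    (q q' q'' : ℝ) (h0 : 0 < q'') (h1 : q'' < q') (h2 : q' < q) (h3 : q < 1)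
    (ε : ℝ) (hε : 0 < ε)
    (ha : |avgLL n m N q xs - expLL n Q N q| ≤ ε / 2)
    (hb : |avgLL n m N q'' xs - expLL n Q N q''| ≤ ε / 2) :
    |avgLL n m N q' xs - expLL n Q N q'| ≤ ε / 2 :=
  stmt3_general n m hm N hpos hlt xs Q hQ1 q q' q'' h0 h1 h2 h3 ε ha hb
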